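/- Let n ≥ 2 and let m be an integer with 0 ≤ m ≤ n. For every λ ∈ ℝⁿ with pairwise distinct components and all r, s ∈ {1,…,n}, Σ_{i=1}ⁿ (∂q^r/∂λ^i)(∂q^s/∂λ^i) (λ^i)^m / Δ_i = (𝒢_m)^{rs}(q(λ)); that is, in the coordinates q^i = (−1)^i σ_i(λ) the contravariant metric G_m = L^m G₀ takes the explicit form 𝒢_m. -/

import Mathlib

open Finset

noncomputable section

/-- `σ_k(λ)`, the `k`-th elementary symmetric polynomial of `λ¹,…,λⁿ`. -/
def esym (n k : ℕ) (lam : Fin n → ℝ) : ℝ :=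
  ∑ t ∈ Finset.powersetCard k (univ : Finset (Fin n)), ∏ i ∈ t, lam i

/-- `Δ_i = ∏_{j ≠ i} (λ^i - λ^j)`. -/
def Del (n : ℕ) (lam : Fin n → ℝ) (i : Fin n) : ℝ :=
  ∏ j ∈ univ.erase i, (lam i - lam j)

/-- `q^r(λ) = (−1)^r σ_r(λ)`. -/
def qcomp (n r : ℕ) (lam : Fin n → ℝ) : ℝ := (-1 : ℝ) ^ r * esym n r lam

/-- The explicit matrix form `𝒢_m` of the contravariant metric `G_m` in the
coordinates `q¹,…,qⁿ` (entries labelled by `r, s ∈ {1,…,n}`). -/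
def Gmat (n m : ℕ) (q : ℕ → ℝ) (r s : ℕ) : ℝ :=
  if 1 ≤ r ∧ r ≤ n - m ∧ 1 ≤ s ∧ s ≤ n - m then
    (if r + s = n - m + 1 then 1 else 0) +
      ∑ j ∈ Finset.Icc 1 (n - m - 1), q j * (if r + s = n - m + j + 1 then 1 else 0)
  else if n - m + 1 ≤ r ∧ r ≤ n ∧ n - m + 1 ≤ s ∧ s ≤ n then
    -∑ j ∈ Finset.Icc (n - m + 1) n, q j * (if r + s = n - m + j + 1 then 1 else 0)
  else 0

namespace MetricAux
open Polynomial

variable {n : ℕ} (lam : Fin n → ℝ)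

/-- elementary symmetric polynomial of the variables with index `≠ i` -/
def Eer (i : Fin n) (k : ℕ) : ℝ :=
  ∑ t ∈ Finset.powersetCard k ((univ : Finset (Fin n)).erase i), ∏ j ∈ t, lam j

lemma esym_zero : esym n 0 lam = 1 := by simp [esym]

lemma qcomp_zero : qcomp n 0 lam = 1 := by simp [qcomp, esym_zero]

lemma Eer_zero (i : Fin n) : Eer lam i 0 = 1 := by simp [Eer]

lemma Eer_eq_zero (i : Fin n) {k : ℕ} (hk : n ≤ k) : Eer lam i k = 0 := by
  have hcard : ((univ : Finset (Fin n)).erase i).card = n - 1 := by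
    rw [card_erase_of_mem (mem_univ i)]; simp
  have : Finset.powersetCard k ((univ : Finset (Fin n)).erase i) = ∅ := by
    rw [Finset.powersetCard_eq_empty, hcard]
    have h1 : 0 < n := i.pos
    omega
  rw [Eer, this, sum_empty]

lemma sum_insert_bij (i : Fin n) (k : ℕ) (f : Finset (Fin n) → ℝ) :
    ∑ t ∈ (Finset.powersetCard (k+1) (univ : Finset (Fin n))).filter (fun t => i ∈ t), f t
      = ∑ t ∈ Finset.powersetCard k ((univ : Finset (Fin n)).erase i), f (insert i t) := by
  refine Finset.sum_nbij' (fun t => t.erase i) (fun t => insert i t) ?_ ?_ ?_ ?_ ?_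
  · intro t ht
    rw [mem_filter, Finset.mem_powersetCard] at ht
    rw [Finset.mem_powersetCard]
    refine ⟨?_, ?_⟩
    · intro x hx
      rw [mem_erase] at hx ⊢
      exact ⟨hx.1, mem_univ x⟩
    · rw [card_erase_of_mem ht.2, ht.1.2]; omega
  · intro t ht
    rw [Finset.mem_powersetCard] at ht
    have hi : i ∉ t := fun h => (mem_erase.mp (ht.1 h)).1 rfl
    rw [mem_filter, Finset.mem_powersetCard]
    exact ⟨⟨subset_univ _, by rw [card_insert_of_notMem hi, ht.2]⟩, mem_insert_self i t⟩
  · intro t ht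
    rw [mem_filter] at ht
    exact insert_erase ht.2
  · intro t ht
    rw [Finset.mem_powersetCard] at ht
    have hi : i ∉ t := fun h => (mem_erase.mp (ht.1 h)).1 rfl
    exact erase_insert hi
  · intro t ht
    rw [mem_filter] at ht
    rw [insert_erase ht.2]

lemma filter_not_mem (i : Fin n) (k : ℕ) :
    (Finset.powersetCard k (univ : Finset (Fin n))).filter (fun t => i ∉ t)
      = Finset.powersetCard k ((univ : Finset (Fin n)).erase i) := by
  ext t
  simp only [mem_filter, Finset.mem_powersetCard, subset_erase, subset_univ, true_and]
  tauto

lemma esym_split (i : Fin n) (k : ℕ) :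
    esym n (k+1) lam = Eer lam i (k+1) + lam i * Eer lam i k := by
  rw [esym, ← Finset.sum_filter_add_sum_filter_not _ (fun t => i ∈ t)]
  rw [sum_insert_bij i k (fun t => ∏ j ∈ t, lam j), filter_not_mem]
  rw [add_comm, Eer, Eer, mul_sum]
  congr 1
  refine Finset.sum_congr rfl fun t ht => ?_
  rw [Finset.mem_powersetCard] at ht
  have hi : i ∉ t := fun h => (mem_erase.mp (ht.1 h)).1 rfl
  rw [prod_insert hi]

lemma Eer_expand (i : Fin n) : ∀ k : ℕ,
    Eer lam i k = ∑ t ∈ range (k+1), (-lam i)^t * esym n (k-t) lam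
  | 0 => by simp [Eer_zero, esym_zero]
  | (k+1) => by
    have hs := esym_split lam i k
    have ih := Eer_expand i k
    rw [Finset.sum_range_succ' (fun t => (-lam i)^t * esym n (k+1-t) lam) (k+1)]
    simp only [pow_succ, pow_zero, one_mul, Nat.sub_zero]
    have : ∀ t ∈ range (k+1), (-lam i)^t * (-lam i) * esym n (k+1-(t+1)) lam
        = -lam i * ((-lam i)^t * esym n (k-t) lam) := by
      intro t _
      have : k + 1 - (t+1) = k - t := by omega
      rw [this]; ring
    rw [Finset.sum_congr rfl this, ← Finset.mul_sum, ← ih]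
    have : Eer lam i (k+1) = esym n (k+1) lam - lam i * Eer lam i k := by
      rw [hs]; ring
    rw [this]; ring


lemma hasFDeriv_esym (r : ℕ) :
    HasFDerivAt (esym n r)
      (∑ t ∈ Finset.powersetCard r (univ : Finset (Fin n)), ∑ j ∈ t,
        (∏ l ∈ t.erase j, lam l) • (ContinuousLinearMap.proj j : (Fin n → ℝ) →L[ℝ] ℝ)) lam := by
  have h := HasFDerivAt.sum (u := Finset.powersetCard r (univ : Finset (Fin n)))
    (A := fun t (x : Fin n → ℝ) => ∏ i ∈ t, x i) (x := lam) fun t _ => hasFDerivAt_finsetProd (𝕜 := ℝ) (u := t) (x := lam)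
  have e : esym n r = ∑ t ∈ Finset.powersetCard r (univ : Finset (Fin n)),
      fun (x : Fin n → ℝ) => ∏ i ∈ t, x i := by
    funext x; simp [esym, Finset.sum_apply]
  rw [e]; exact h

lemma fderiv_qcomp (i : Fin n) (k : ℕ) :
    fderiv ℝ (qcomp n (k+1)) lam (Pi.single i 1) = (-1:ℝ)^(k+1) * Eer lam i k := by
  have h : HasFDerivAt (qcomp n (k+1))
      ((-1:ℝ)^(k+1) • (∑ t ∈ Finset.powersetCard (k+1) (univ : Finset (Fin n)), ∑ j ∈ t,
        (∏ l ∈ t.erase j, lam l) • (ContinuousLinearMap.proj j : (Fin n → ℝ) →L[ℝ] ℝ))) lam := by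
    have := (hasFDeriv_esym lam (k+1)).const_mul ((-1:ℝ)^(k+1))
    exact this
  rw [h.fderiv]
  rw [ContinuousLinearMap.smul_apply, ContinuousLinearMap.sum_apply]
  have hterm : ∀ t ∈ Finset.powersetCard (k+1) (univ : Finset (Fin n)),
      ((∑ j ∈ t, (∏ l ∈ t.erase j, lam l) •
        (ContinuousLinearMap.proj j : (Fin n → ℝ) →L[ℝ] ℝ)) (Pi.single i 1))
      = if i ∈ t then ∏ l ∈ t.erase i, lam l else 0 := by
    intro t _
    rw [ContinuousLinearMap.sum_apply]
    have : ∀ j ∈ t, ((∏ l ∈ t.erase j, lam l) •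
        (ContinuousLinearMap.proj j : (Fin n → ℝ) →L[ℝ] ℝ)) (Pi.single i 1)
        = if j = i then ∏ l ∈ t.erase j, lam l else 0 := by
      intro j _
      rw [ContinuousLinearMap.smul_apply, ContinuousLinearMap.proj_apply]
      by_cases hji : j = i
      · subst hji; simp
      · simp [Pi.single_eq_of_ne hji, hji]
    rw [Finset.sum_congr rfl this, Finset.sum_ite_eq' t i (fun j => ∏ l ∈ t.erase j, lam l)]
  rw [Finset.sum_congr rfl hterm, ← Finset.sum_filter]
  rw [sum_insert_bij i k (fun t => ∏ l ∈ t.erase i, lam l)]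
  rw [smul_eq_mul, Eer]
  congr 1
  refine Finset.sum_congr rfl fun t ht => ?_
  rw [Finset.mem_powersetCard] at ht
  have hi : i ∉ t := fun h => (mem_erase.mp (ht.1 h)).1 rfl
  rw [erase_insert hi]


lemma fderiv_q_expand (i : Fin n) (k : ℕ) :
    fderiv ℝ (qcomp n (k+1)) lam (Pi.single i 1)
      = -(∑ u ∈ range (k+1), qcomp n u lam * lam i ^ (k - u)) := by
  rw [fderiv_qcomp, Eer_expand]
  rw [← Finset.sum_range_reflect (fun u => qcomp n u lam * lam i ^ (k - u)) (k+1)]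
  rw [Finset.mul_sum, ← Finset.sum_neg_distrib]
  refine Finset.sum_congr rfl fun t ht => ?_
  rw [mem_range] at ht
  have ht' : t ≤ k := by omega
  have h1 : k + 1 - 1 - t = k - t := by omega
  rw [h1]
  have h2 : k - (k - t) = t := by omega
  rw [qcomp, h2]
  have h3 : (-1:ℝ)^(k-t) * (-1:ℝ)^t = (-1:ℝ)^k := by
    rw [← pow_add]; congr 1; omega
  have h4 : (-lam i)^t = (-1:ℝ)^t * lam i ^ t := by rw [neg_pow]
  have ht2 : ((-1:ℝ)^t)*((-1:ℝ)^t) = 1 := by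
    rw [← pow_add]; exact Even.neg_one_pow ⟨t, rfl⟩
  have h5 : (-1:ℝ)^(k-t) = (-1)^k * (-1)^t := by
    calc (-1:ℝ)^(k-t) = (-1)^(k-t) * ((-1)^t * (-1)^t) := by rw [ht2, mul_one]
    _ = ((-1)^(k-t) * (-1)^t) * (-1)^t := by ring
    _ = (-1)^k * (-1)^t := by rw [h3]
  rw [h4, pow_succ, h5]
  ring

lemma root_sum (i : Fin n) :
    ∑ j ∈ range (n+1), qcomp n j lam * lam i ^ (n - j) = 0 := by
  set a : ℕ → ℝ := fun j => (-1:ℝ)^j * Eer lam i j * lam i ^ (n - j) with ha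
  have hstep : ∀ j ∈ range n, qcomp n (j+1) lam * lam i ^ (n - (j+1)) = a (j+1) - a j := by
    intro j hj
    rw [mem_range] at hj
    have hpow : lam i ^ (n - j) = lam i * lam i ^ (n - (j+1)) := by
      rw [← pow_succ']; congr 1; omega
    rw [ha]
    simp only []
    rw [qcomp, esym_split lam i j, hpow, pow_succ]
    ring
  rw [Finset.sum_range_succ' (fun j => qcomp n j lam * lam i ^ (n - j)) n]
  rw [Finset.sum_congr rfl hstep, Finset.sum_range_sub a]
  have ha0 : a 0 = lam i ^ n := by simp [ha, Eer_zero]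
  have han : a n = 0 := by simp [ha, Eer_eq_zero lam i (le_refl n)]
  rw [han, ha0]
  simp [qcomp_zero]

lemma Del_ne_zero (hdist : Function.Injective lam) (i : Fin n) : Del n lam i ≠ 0 := by
  rw [Del, Finset.prod_ne_zero_iff]
  intro j hj
  rw [mem_erase] at hj
  exact sub_ne_zero_of_ne fun h => hj.1 (hdist h.symm)

lemma basis_coeff (hdist : Function.Injective lam) (i : Fin n) :
    (Lagrange.basis univ lam i).coeff (n-1) = (Del n lam i)⁻¹ := by
  have hb : Lagrange.basis univ lam i
      = C (Del n lam i)⁻¹ * ∏ j ∈ (univ : Finset (Fin n)).erase i, (X - C (lam j)) := by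
    rw [Lagrange.basis]
    simp only [Lagrange.basisDivisor]
    rw [Finset.prod_mul_distrib, Del, ← Finset.prod_inv_distrib, map_prod]
  rw [hb, coeff_C_mul]
  have hm : (∏ j ∈ (univ : Finset (Fin n)).erase i, (X - C (lam j))).Monic :=
    monic_prod_of_monic _ _ (fun j _ => monic_X_sub_C _)
  have hdeg : (∏ j ∈ (univ : Finset (Fin n)).erase i, (X - C (lam j))).natDegree = n - 1 := by
    rw [natDegree_prod]
    · simp only [natDegree_X_sub_C]
      rw [Finset.sum_const, smul_eq_mul, mul_one, card_erase_of_mem (mem_univ i)]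
      simp
    · intro j _; exact X_sub_C_ne_zero _
  rw [← hdeg, hm.coeff_natDegree, mul_one]

lemma lag0 (hdist : Function.Injective lam) (k : ℕ) (hk : k < n) :
    ∑ i : Fin n, lam i ^ k / Del n lam i = if k = n - 1 then 1 else 0 := by
  have hinj : Set.InjOn lam ↑(univ : Finset (Fin n)) := fun a _ b _ h => hdist h
  have hdeg : (X ^ k : ℝ[X]).degree < (univ : Finset (Fin n)).card := by
    rw [degree_X_pow]
    simp only [card_univ, Fintype.card_fin]
    exact_mod_cast hk
  have hint := Lagrange.eq_interpolate (v := lam) hinj hdeg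
  have hco := congrArg (fun p : ℝ[X] => p.coeff (n-1)) hint
  simp only [Lagrange.interpolate_apply] at hco
  rw [coeff_X_pow, finset_sum_coeff] at hco
  have : ∀ i ∈ (univ : Finset (Fin n)),
      (C (eval (lam i) (X^k : ℝ[X])) * Lagrange.basis univ lam i).coeff (n-1)
        = lam i ^ k / Del n lam i := by
    intro i _
    rw [coeff_C_mul, basis_coeff lam hdist i, eval_pow, eval_X, div_eq_mul_inv]
  rw [Finset.sum_congr rfl this] at hco
  rw [← hco]
  by_cases h : k = n - 1
  · rw [if_pos h, if_pos (by omega)]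
  · rw [if_neg h, if_neg (by omega)]


lemma fderiv_q_expand' (i : Fin n) (r : ℕ) (hr : 1 ≤ r) :
    fderiv ℝ (qcomp n r) lam (Pi.single i 1)
      = -(∑ u ∈ range r, qcomp n u lam * lam i ^ (r - 1 - u)) := by
  obtain ⟨k, rfl⟩ : ∃ k, r = k + 1 := ⟨r - 1, by omega⟩
  simpa using fderiv_q_expand lam i k

def Pfun (n : ℕ) (lam : Fin n → ℝ) (k : ℤ) : ℝ :=
  if 0 ≤ k then ∑ i : Fin n, lam i ^ k.toNat / Del n lam i else 0

lemma Pf_small (hdist : Function.Injective lam) {k : ℤ} (hk : k ≤ (n:ℤ) - 2) :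
    Pfun n lam k = 0 := by
  by_cases h : 0 ≤ k
  · rw [Pfun, if_pos h, lag0 lam hdist k.toNat (by omega), if_neg (by omega)]
  · rw [Pfun, if_neg h]

lemma Pf_top (hdist : Function.Injective lam) (hn : 1 ≤ n) :
    Pfun n lam ((n:ℤ) - 1) = 1 := by
  rw [Pfun, if_pos (by omega), lag0 lam hdist _ (by omega), if_pos (by omega)]

lemma keyP (hdist : Function.Injective lam) (hn : 2 ≤ n) (k : ℤ) :
    ∑ j ∈ range (n+1), qcomp n j lam * Pfun n lam (k - j)
      = if k = (n:ℤ) - 1 then 1 else 0 := by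
  rcases lt_trichotomy k ((n:ℤ) - 1) with hk | hk | hk
  · rw [if_neg (by omega)]
    exact Finset.sum_eq_zero fun j _ =>
      by rw [Pf_small lam hdist (by omega), mul_zero]
  · subst hk
    rw [if_pos rfl]
    rw [Finset.sum_range_succ' (fun j => qcomp n j lam * Pfun n lam ((n:ℤ) - 1 - j)) n]
    have h1 : ∀ j ∈ range n, qcomp n (j+1) lam * Pfun n lam ((n:ℤ) - 1 - (j+1:ℕ)) = 0 := by
      intro j hj
      rw [Pf_small lam hdist (by push_cast; omega), mul_zero]
    rw [Finset.sum_congr rfl h1]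
    simp only [Finset.sum_const_zero, zero_add, Nat.cast_zero, sub_zero]
    rw [qcomp_zero, Pf_top lam hdist (by omega), one_mul]
  · rw [if_neg (by omega)]
    have hstep : ∀ j ∈ range (n+1), qcomp n j lam * Pfun n lam (k - j)
        = ∑ i : Fin n, qcomp n j lam * (lam i ^ (k - n).toNat * lam i ^ (n - j)) / Del n lam i := by
      intro j hj
      rw [mem_range] at hj
      rw [Pfun, if_pos (by omega)]
      rw [show (k - (j:ℤ)).toNat = (k - n).toNat + (n - j) from by omega]
      rw [Finset.mul_sum]
      exact Finset.sum_congr rfl fun i _ => by rw [pow_add]; ring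
    rw [Finset.sum_congr rfl hstep, Finset.sum_comm]
    refine Finset.sum_eq_zero fun i _ => ?_
    have : ∀ j ∈ range (n+1), qcomp n j lam * (lam i ^ (k - n).toNat * lam i ^ (n - j)) / Del n lam i
        = (lam i ^ (k - n).toNat / Del n lam i) * (qcomp n j lam * lam i ^ (n - j)) := by
      intro j _; ring
    rw [Finset.sum_congr rfl this, ← Finset.mul_sum, root_sum lam i, mul_zero]

lemma sum_delta (F : Finset ℕ) (g : ℕ → ℝ) (c : ℤ) :
    ∑ u ∈ F, g u * (if (u:ℤ) = c then 1 else 0)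
      = if 0 ≤ c ∧ c.toNat ∈ F then g c.toNat else 0 := by
  by_cases hc : 0 ≤ c ∧ c.toNat ∈ F
  · rw [if_pos hc]
    rw [Finset.sum_eq_single_of_mem c.toNat hc.2 ?_]
    · rw [if_pos (by omega), mul_one]
    · intro u hu hne
      rw [if_neg (by omega), mul_zero]
  · rw [if_neg hc]
    refine Finset.sum_eq_zero fun u hu => ?_
    by_cases h : (u:ℤ) = c
    · exact absurd ⟨by omega, by rw [show c.toNat = u from by omega]; exact hu⟩ hc
    · rw [if_neg h, mul_zero]

end MetricAux

open MetricAux in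
/-- in the coordinates `q^i = (−1)^i σ_i(λ)` the contravariant metric
`G_m = L^m G₀` (diagonal with entries `(λ^i)^m/Δ_i`) takes the explicit form `𝒢_m`:
`Σ_i (∂q^r/∂λ^i)(∂q^s/∂λ^i)(λ^i)^m/Δ_i = (𝒢_m)^{rs}(q(λ))`. -/
theorem metric_in_q_coordinates
    (n : ℕ) (hn : 2 ≤ n) (m : ℕ) (hm : m ≤ n)
    (lam : Fin n → ℝ) (hdist : Function.Injective lam)
    (r s : ℕ) (hr : r ∈ Finset.Icc 1 n) (hs : s ∈ Finset.Icc 1 n) :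
    ∑ i : Fin n,
        fderiv ℝ (qcomp n r) lam (Pi.single i 1) *
          fderiv ℝ (qcomp n s) lam (Pi.single i 1) * lam i ^ m / Del n lam i =
      Gmat n m (fun j => qcomp n j lam) r s := by
  rw [Finset.mem_Icc] at hr hs
  obtain ⟨hr1, hrn⟩ := hr
  obtain ⟨hs1, hsn⟩ := hs
  have hfull : ∀ c : ℤ, ∑ j ∈ range (n+1), qcomp n j lam * Pfun n lam (c - j)
      = if c = (n:ℤ) - 1 then 1 else 0 := keyP lam hdist hn
  have hsplit : ∀ (a : ℕ), a ≤ n+1 → ∀ (g : ℕ → ℝ),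
      ∑ j ∈ range (n+1), g j = ∑ j ∈ range a, g j + ∑ j ∈ Ico a (n+1), g j := by
    intro a ha g
    simp only [range_eq_Ico]
    exact (Finset.sum_Ico_consecutive g (Nat.zero_le a) ha).symm
  -- Step 1 : LHS as double sum over u, v of Pfun
  have step1 : ∑ i : Fin n,
        fderiv ℝ (qcomp n r) lam (Pi.single i 1) *
          fderiv ℝ (qcomp n s) lam (Pi.single i 1) * lam i ^ m / Del n lam i
      = ∑ u ∈ range r, ∑ v ∈ range s,
          qcomp n u lam * qcomp n v lam * Pfun n lam ((r:ℤ) + s - 2 + m - u - v) := by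
    have e1 : ∑ i : Fin n,
        fderiv ℝ (qcomp n r) lam (Pi.single i 1) *
          fderiv ℝ (qcomp n s) lam (Pi.single i 1) * lam i ^ m / Del n lam i
        = ∑ i : Fin n, ∑ u ∈ range r, ∑ v ∈ range s,
            qcomp n u lam * qcomp n v lam * (lam i ^ ((r-1-u) + ((s-1-v) + m)) / Del n lam i) := by
      refine Finset.sum_congr rfl fun i _ => ?_
      rw [fderiv_q_expand' lam i r hr1, fderiv_q_expand' lam i s hs1, neg_mul_neg]
      rw [Finset.sum_mul_sum, Finset.sum_mul, Finset.sum_div]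
      refine Finset.sum_congr rfl fun u _ => ?_
      rw [Finset.sum_mul, Finset.sum_div]
      refine Finset.sum_congr rfl fun v _ => ?_
      rw [pow_add, pow_add]
      ring
    rw [e1, Finset.sum_comm]
    refine Finset.sum_congr rfl fun u hu => ?_
    rw [Finset.sum_comm]
    refine Finset.sum_congr rfl fun v hv => ?_
    rw [mem_range] at hu hv
    rw [Pfun, if_pos (by omega)]
    rw [show ((r:ℤ) + s - 2 + m - u - v).toNat = (r-1-u) + ((s-1-v) + m) from by omega]
    rw [← Finset.mul_sum]
  -- Step 2 : evaluate the double sum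
  have step2 : ∑ u ∈ range r, ∑ v ∈ range s,
        qcomp n u lam * qcomp n v lam * Pfun n lam ((r:ℤ) + s - 2 + m - u - v)
      = (∑ u ∈ range r, qcomp n u lam * (if (u:ℤ) = (r:ℤ) + s + m - n - 1 then 1 else 0))
        - ∑ v ∈ Ico s (n+1), qcomp n v lam * (if (v:ℤ) = (r:ℤ) + s + m - n - 1 then 1 else 0) := by
    have f2 : ∀ u : ℕ, u < r → ∑ v ∈ range s, qcomp n v lam * Pfun n lam ((r:ℤ) + s - 2 + m - u - v)
        = (if (u:ℤ) = (r:ℤ) + s + m - n - 1 then 1 else 0)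
          - ∑ v ∈ Ico s (n+1), qcomp n v lam * Pfun n lam ((r:ℤ) + s - 2 + m - u - v) := by
      intro u hu
      have h := hfull ((r:ℤ) + s - 2 + m - u)
      rw [hsplit s (by omega)] at h
      have hiff : ((r:ℤ) + s - 2 + m - u = (n:ℤ) - 1) ↔ ((u:ℤ) = (r:ℤ) + s + m - n - 1) := by omega
      rw [if_congr hiff rfl rfl] at h
      linarith [h]
    have g2 : ∀ v ∈ Ico s (n+1), ∑ u ∈ range r,
          qcomp n u lam * (qcomp n v lam * Pfun n lam ((r:ℤ) + s - 2 + m - u - v))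
        = qcomp n v lam * (if (v:ℤ) = (r:ℤ) + s + m - n - 1 then 1 else 0) := by
      intro v hv
      rw [mem_Ico] at hv
      have c1 : ∑ u ∈ range r, qcomp n u lam * (qcomp n v lam * Pfun n lam ((r:ℤ) + s - 2 + m - u - v))
          = qcomp n v lam * ∑ u ∈ range r, qcomp n u lam * Pfun n lam ((r:ℤ) + s - 2 + m - v - u) := by
        rw [Finset.mul_sum]
        refine Finset.sum_congr rfl fun u _ => ?_
        rw [show ((r:ℤ) + s - 2 + m - u - v) = ((r:ℤ) + s - 2 + m - v - u) from by ring]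
        ring
      rw [c1]
      congr 1
      have h := hfull ((r:ℤ) + s - 2 + m - v)
      rw [hsplit r (by omega)] at h
      have htail : ∑ u ∈ Ico r (n+1), qcomp n u lam * Pfun n lam ((r:ℤ) + s - 2 + m - v - u) = 0 := by
        refine Finset.sum_eq_zero fun u hu => ?_
        rw [mem_Ico] at hu
        rw [Pf_small lam hdist (by omega), mul_zero]
      rw [htail, add_zero] at h
      rw [h]
      have hiff : ((r:ℤ) + s - 2 + m - v = (n:ℤ) - 1) ↔ ((v:ℤ) = (r:ℤ) + s + m - n - 1) := by omega
      rw [if_congr hiff rfl rfl]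
    have c0 : ∀ u ∈ range r, ∑ v ∈ range s,
          qcomp n u lam * qcomp n v lam * Pfun n lam ((r:ℤ) + s - 2 + m - u - v)
        = qcomp n u lam * ∑ v ∈ range s, qcomp n v lam * Pfun n lam ((r:ℤ) + s - 2 + m - u - v) := by
      intro u _
      rw [Finset.mul_sum]
      exact Finset.sum_congr rfl fun v _ => by ring
    rw [Finset.sum_congr rfl c0]
    have c2 : ∀ u ∈ range r, qcomp n u lam * ∑ v ∈ range s,
          qcomp n v lam * Pfun n lam ((r:ℤ) + s - 2 + m - u - v)
        = qcomp n u lam * (if (u:ℤ) = (r:ℤ) + s + m - n - 1 then 1 else 0)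
          - ∑ v ∈ Ico s (n+1), qcomp n u lam * (qcomp n v lam * Pfun n lam ((r:ℤ) + s - 2 + m - u - v)) := by
      intro u hu
      rw [mem_range] at hu
      rw [f2 u hu, mul_sub, Finset.mul_sum]
    rw [Finset.sum_congr rfl c2, Finset.sum_sub_distrib]
    congr 1
    rw [Finset.sum_comm, Finset.sum_congr rfl g2]
  rw [step1, step2]
  rw [sum_delta (range r) (fun u => qcomp n u lam) ((r:ℤ) + s + m - n - 1)]
  rw [sum_delta (Ico s (n+1)) (fun v => qcomp n v lam) ((r:ℤ) + s + m - n - 1)]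
  -- Step 3 : case analysis against Gmat
  rcases le_or_gt r (n - m) with h1 | h1 <;> rcases le_or_gt s (n - m) with h2 | h2
  · -- r ≤ N, s ≤ N
    have hC2 : ¬(0 ≤ (r:ℤ) + s + m - n - 1 ∧ ((r:ℤ) + s + m - n - 1).toNat ∈ Ico s (n+1)) := by
      simp only [mem_Ico]; omega
    have hGm : (1 ≤ r ∧ r ≤ n - m ∧ 1 ≤ s ∧ s ≤ n - m) := ⟨hr1, h1, hs1, h2⟩
    rw [if_neg hC2, sub_zero, Gmat, if_pos hGm]
    have hsum : ∑ j ∈ Finset.Icc 1 (n - m - 1),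
        qcomp n j lam * (if r + s = n - m + j + 1 then 1 else 0)
        = ∑ j ∈ Finset.Icc 1 (n - m - 1),
            qcomp n j lam * (if (j:ℤ) = (r:ℤ) + s + m - n - 1 then 1 else 0) := by
      refine Finset.sum_congr rfl fun j _ => ?_
      have hiffj : (r + s = n - m + j + 1) ↔ ((j:ℤ) = (r:ℤ) + s + m - n - 1) := by omega
      rw [if_congr hiffj rfl rfl]
    rw [hsum, sum_delta (Finset.Icc 1 (n-m-1)) (fun j => qcomp n j lam) ((r:ℤ) + s + m - n - 1)]
    rcases lt_trichotomy ((r:ℤ) + s + m - n - 1) 0 with hk | hk | hk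
    · have hC1 : ¬(0 ≤ (r:ℤ) + s + m - n - 1 ∧ ((r:ℤ) + s + m - n - 1).toNat ∈ range r) := by
        simp only [mem_range]; omega
      have hCI : ¬(0 ≤ (r:ℤ) + s + m - n - 1 ∧ ((r:ℤ) + s + m - n - 1).toNat ∈ Finset.Icc 1 (n-m-1)) := by
        simp only [mem_Icc]; omega
      rw [if_neg hC1, if_neg hCI, if_neg (by omega : ¬(r + s = n - m + 1)), add_zero]
    · have hC1 : (0 ≤ (r:ℤ) + s + m - n - 1 ∧ ((r:ℤ) + s + m - n - 1).toNat ∈ range r) := by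
        simp only [mem_range]; omega
      have hCI : ¬(0 ≤ (r:ℤ) + s + m - n - 1 ∧ ((r:ℤ) + s + m - n - 1).toNat ∈ Finset.Icc 1 (n-m-1)) := by
        simp only [mem_Icc]; omega
      rw [if_pos hC1, if_neg hCI, if_pos (by omega : r + s = n - m + 1), add_zero]
      rw [show ((r:ℤ) + s + m - n - 1).toNat = 0 from by omega, qcomp_zero]
    · have hC1 : (0 ≤ (r:ℤ) + s + m - n - 1 ∧ ((r:ℤ) + s + m - n - 1).toNat ∈ range r) := by
        simp only [mem_range]; omega
      have hCI : (0 ≤ (r:ℤ) + s + m - n - 1 ∧ ((r:ℤ) + s + m - n - 1).toNat ∈ Finset.Icc 1 (n-m-1)) := by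
        simp only [mem_Icc]; omega
      rw [if_pos hC1, if_pos hCI, if_neg (by omega : ¬(r + s = n - m + 1)), zero_add]
  · -- r ≤ N < s
    have hC1 : ¬(0 ≤ (r:ℤ) + s + m - n - 1 ∧ ((r:ℤ) + s + m - n - 1).toNat ∈ range r) := by
      simp only [mem_range]; omega
    have hC2 : ¬(0 ≤ (r:ℤ) + s + m - n - 1 ∧ ((r:ℤ) + s + m - n - 1).toNat ∈ Ico s (n+1)) := by
      simp only [mem_Ico]; omega
    have hGm1 : ¬(1 ≤ r ∧ r ≤ n - m ∧ 1 ≤ s ∧ s ≤ n - m) := by omega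
    have hGm2 : ¬(n - m + 1 ≤ r ∧ r ≤ n ∧ n - m + 1 ≤ s ∧ s ≤ n) := by omega
    rw [if_neg hC1, if_neg hC2, sub_zero, Gmat, if_neg hGm1, if_neg hGm2]
  · -- s ≤ N < r
    have hC1 : (0 ≤ (r:ℤ) + s + m - n - 1 ∧ ((r:ℤ) + s + m - n - 1).toNat ∈ range r) := by
      simp only [mem_range]; omega
    have hC2 : (0 ≤ (r:ℤ) + s + m - n - 1 ∧ ((r:ℤ) + s + m - n - 1).toNat ∈ Ico s (n+1)) := by
      simp only [mem_Ico]; omega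
    have hGm1 : ¬(1 ≤ r ∧ r ≤ n - m ∧ 1 ≤ s ∧ s ≤ n - m) := by omega
    have hGm2 : ¬(n - m + 1 ≤ r ∧ r ≤ n ∧ n - m + 1 ≤ s ∧ s ≤ n) := by omega
    rw [if_pos hC1, if_pos hC2, sub_self, Gmat, if_neg hGm1, if_neg hGm2]
  · -- N < r, N < s
    have hC1 : ¬(0 ≤ (r:ℤ) + s + m - n - 1 ∧ ((r:ℤ) + s + m - n - 1).toNat ∈ range r) := by
      simp only [mem_range]; omega
    have hGm1 : ¬(1 ≤ r ∧ r ≤ n - m ∧ 1 ≤ s ∧ s ≤ n - m) := by omega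
    have hGm2 : (n - m + 1 ≤ r ∧ r ≤ n ∧ n - m + 1 ≤ s ∧ s ≤ n) := ⟨by omega, hrn, by omega, hsn⟩
    rw [if_neg hC1, zero_sub, Gmat, if_neg hGm1, if_pos hGm2]
    have hsum : ∑ j ∈ Finset.Icc (n - m + 1) n,
        qcomp n j lam * (if r + s = n - m + j + 1 then 1 else 0)
        = ∑ j ∈ Finset.Icc (n - m + 1) n,
            qcomp n j lam * (if (j:ℤ) = (r:ℤ) + s + m - n - 1 then 1 else 0) := by
      refine Finset.sum_congr rfl fun j _ => ?_
      have hiffj : (r + s = n - m + j + 1) ↔ ((j:ℤ) = (r:ℤ) + s + m - n - 1) := by omega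
      rw [if_congr hiffj rfl rfl]
    rw [hsum, sum_delta (Finset.Icc (n-m+1) n) (fun j => qcomp n j lam) ((r:ℤ) + s + m - n - 1)]
    have hiff : (0 ≤ (r:ℤ) + s + m - n - 1 ∧ ((r:ℤ) + s + m - n - 1).toNat ∈ Ico s (n+1))
        ↔ (0 ≤ (r:ℤ) + s + m - n - 1 ∧ ((r:ℤ) + s + m - n - 1).toNat ∈ Finset.Icc (n-m+1) n) := by
      simp only [mem_Ico, mem_Icc]; omega
    rw [if_congr hiff rfl rfl]
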